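/- arXiv:1506.02582 — 2 statements merged into one kernel-verified Lean document; each statement's English description precedes it below -/
import Mathlib

section
/- Under Assumption 1, for any given initial condition (e_0, F_0), the emphatic trace iterates satisfy sup_{t≥0} 𝔼[‖(e_t, F_t)‖] < ∞. -/
open MeasureTheory Filter Finset

noncomputable section

/-- Importance sampling ratio `ρ(s,a) = π(a|s)/π°(a|s)` (with the convention `0/0 = 0`,
which is automatic for Lean's real division). -/
def rho {S A : Type*} (pol polb : S → A → ℝ) (s : S) (a : A) : ℝ :=
  pol s a / polb s a

/-- Transition matrix of the state chain induced by a policy: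
`P_π(s,s') = ∑_a π(a|s) p(s'|s,a)`. -/
def Ppi {S A : Type*} [Fintype A] (p : S → A → S → ℝ) (pol : S → A → ℝ) :
    Matrix S S ℝ :=
  Matrix.of fun s s' => ∑ a, pol s a * p s a s'

/-- The σ-algebra `F_t = σ(S_0, A_0, …, A_{t-1}, S_t)`. -/
def filtSA {Ω S A : Type*} [MeasurableSpace S] [MeasurableSpace A]
    (St : ℕ → Ω → S) (At : ℕ → Ω → A) (t : ℕ) : MeasurableSpace Ω :=
  (⨆ k ∈ Finset.range (t + 1), MeasurableSpace.comap (St k) inferInstance) ⊔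
    ⨆ k ∈ Finset.range t, MeasurableSpace.comap (At k) inferInstance

/-- Basic conditions on the MDP model together with Assumption 1. -/
structure MDPModel {S A : Type*} [Fintype S] [Fintype A] [DecidableEq S]
    (p : S → A → S → ℝ) (pol polb : S → A → ℝ) (γf lamf ifun : S → ℝ) : Prop where
  p_nonneg : ∀ s a s', 0 ≤ p s a s'
  p_sum : ∀ s a, ∑ s', p s a s' = 1
  pol_nonneg : ∀ s a, 0 ≤ pol s a
  pol_sum : ∀ s, ∑ a, pol s a = 1
  polb_nonneg : ∀ s a, 0 ≤ polb s a
  polb_sum : ∀ s, ∑ a, polb s a = 1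
  gamma_mem : ∀ s, γf s ∈ Set.Icc (0 : ℝ) 1
  lambda_mem : ∀ s, lamf s ∈ Set.Icc (0 : ℝ) 1
  interest_nonneg : ∀ s, 0 ≤ ifun s
  /-- Assumption 1(i): `I - P_π Γ` is invertible. -/
  inv : IsUnit (1 - Ppi p pol * Matrix.diagonal γf)
  /-- Assumption 1(ii): the behavior chain is irreducible. -/
  irred : ∀ s s', ∃ t : ℕ, 0 < t ∧ 0 < (Ppi p polb ^ t) s s'
  /-- Assumption 1(ii): `π°(a|s) > 0` whenever `π(a|s) > 0`. -/
  support : ∀ s a, 0 < pol s a → 0 < polb s a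

/-- The state-action process `(S_t, A_t)` is the Markov chain induced by the behavior
policy `π°` (arbitrary initial distribution). -/
structure IsBehaviorChain {S A Ω : Type*} [Fintype S] [Fintype A]
    [MeasurableSpace S] [MeasurableSpace A] [MeasurableSpace Ω]
    (p : S → A → S → ℝ) (polb : S → A → ℝ)
    (P : Measure Ω) (St : ℕ → Ω → S) (At : ℕ → Ω → A) : Prop where
  smeas : ∀ t, Measurable (St t)
  ameas : ∀ t, Measurable (At t)
  markov : ∀ (t : ℕ) (f : A × S → ℝ),
    (P[(fun ω => f (At t ω, St (t + 1) ω)) | filtSA St At t]) =ᵐ[P]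
      fun ω => ∑ a, ∑ s', polb (St t ω) a * p (St t ω) a s' * f (a, s')

/-- The emphatic trace iterates `(e_t, F_t)` with initial condition `(e0, F0)`. -/
structure IsTrace {S A Ω : Type*} {n : ℕ} (pol polb : S → A → ℝ) (γf lamf ifun : S → ℝ)
    (φ : S → Fin n → ℝ) (St : ℕ → Ω → S) (At : ℕ → Ω → A)
    (e : ℕ → Ω → Fin n → ℝ) (F : ℕ → Ω → ℝ) (e0 : Fin n → ℝ) (F0 : ℝ) : Prop where
  init_e : ∀ ω, e 0 ω = e0
  init_F : ∀ ω, F 0 ω = F0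
  rec_F : ∀ t ω, F (t + 1) ω =
    γf (St (t + 1) ω) * rho pol polb (St t ω) (At t ω) * F t ω + ifun (St (t + 1) ω)
  rec_e : ∀ t ω, e (t + 1) ω =
    (lamf (St (t + 1) ω) * γf (St (t + 1) ω) * rho pol polb (St t ω) (At t ω)) • e t ω +
      (lamf (St (t + 1) ω) * ifun (St (t + 1) ω) +
        (1 - lamf (St (t + 1) ω)) * F (t + 1) ω) • φ (St (t + 1) ω)

end

/-!
For a process with `G (t+1) ≤ γ(S_{t+1}) ρ_t G_t + R_{t+1}`, set `x_t(s) = 𝔼[G_t; S_t = s]`.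
Conditioning on the history and using `π° ρ = π` gives `x_{t+1} ≤ x_t P_π Γ + 𝔼 R_{t+1}`.
As `P_π Γ` is substochastic, the partial Neumann sums
`∑_{k<t} (P_π Γ)^k = (I - (P_π Γ)^t) (I - P_π Γ)⁻¹` have bounded entries, so `𝔼 G_t` stays
bounded whenever `𝔼 R_t` does. This applies to `G = F` with `R_t = i(S_t)`, and then to
`G = ‖e‖` with `R` controlled by `F`.
-/

namespace Matrix

variable {ι : Type*} [Fintype ι] {M : Matrix ι ι ℝ}

theorem vecMul_mono_left (hM : ∀ i j, 0 ≤ M i j) {v w : ι → ℝ} (hvw : v ≤ w) :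
    v ᵥ* M ≤ w ᵥ* M := fun j =>
  Finset.sum_le_sum fun i _ => mul_le_mul_of_nonneg_right (hvw i) (hM i j)

variable [DecidableEq ι]

theorem sum_pow_apply_le_one (hM : ∀ i j, 0 ≤ M i j) (hM₁ : ∀ i, ∑ j, M i j ≤ 1) (k : ℕ)
    (i : ι) : ∑ j, (M ^ k) i j ≤ 1 := by
  induction k generalizing i with
  | zero => simp [one_apply]
  | succ k ih =>
    calc ∑ j, (M ^ (k + 1)) i j = ∑ l, M i l * ∑ j, (M ^ k) l j := by
          simp only [pow_succ', mul_apply, Finset.mul_sum]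
          exact Finset.sum_comm
      _ ≤ ∑ l, M i l := Finset.sum_le_sum fun l _ => mul_le_of_le_one_right (hM i l) (ih l)
      _ ≤ 1 := hM₁ i

theorem pow_apply_le_one (hM : ∀ i j, 0 ≤ M i j) (hM₁ : ∀ i, ∑ j, M i j ≤ 1) (k : ℕ)
    (i j : ι) : (M ^ k) i j ≤ 1 :=
  (Finset.single_le_sum (fun l _ => pow_apply_nonneg hM k i l) (Finset.mem_univ j)).trans
    (sum_pow_apply_le_one hM hM₁ k i)

theorem exists_sum_range_pow_apply_le (hM : ∀ i j, 0 ≤ M i j) (hM₁ : ∀ i, ∑ j, M i j ≤ 1)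
    (hinv : IsUnit (1 - M)) : ∃ C, ∀ t i j, (∑ k ∈ Finset.range t, M ^ k) i j ≤ C := by
  obtain ⟨N, hN⟩ := hinv.exists_right_inv
  obtain ⟨C, hC⟩ := Finite.exists_le fun j => ∑ l, |N l j|
  refine ⟨C, fun t i j => ?_⟩
  have hsum : ∑ k ∈ Finset.range t, M ^ k = (1 - M ^ t) * N := by
    rw [← geom_sum_mul_neg, mul_assoc, hN, mul_one]
  have hentry : ∀ l, |(1 - M ^ t) i l| ≤ 1 := fun l => by
    have h₀ := pow_apply_nonneg hM t i l
    have h₁ := pow_apply_le_one hM hM₁ t i l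
    rw [sub_apply, abs_le, one_apply]
    split_ifs <;> constructor <;> linarith
  calc (∑ k ∈ Finset.range t, M ^ k) i j = ∑ l, (1 - M ^ t) i l * N l j := by
        rw [hsum, mul_apply]
    _ ≤ ∑ l, |N l j| := Finset.sum_le_sum fun l _ =>
        (le_abs_self _).trans ((abs_mul _ _).trans_le (mul_le_of_le_one_left (abs_nonneg _)
          (hentry l)))
    _ ≤ C := hC j

theorem exists_forall_le_of_le_vecMul_add (hM : ∀ i j, 0 ≤ M i j)
    (hM₁ : ∀ i, ∑ j, M i j ≤ 1) (hinv : IsUnit (1 - M)) {x : ℕ → ι → ℝ} {c : ℝ} (hc : 0 ≤ c)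
    (hx : ∀ t j, x (t + 1) j ≤ (x t ᵥ* M) j + c) : ∃ D, ∀ t j, x t j ≤ D := by
  obtain ⟨C, hC⟩ := exists_sum_range_pow_apply_le hM hM₁ hinv
  set u : ℕ → ι → ℝ := fun t => x 0 ᵥ* M ^ t + (fun _ => c) ᵥ* ∑ k ∈ Finset.range t, M ^ k
  have hgeom : ∀ t, ∑ k ∈ Finset.range (t + 1), M ^ k = (∑ k ∈ Finset.range t, M ^ k) * M + 1 :=
    fun t => by simp only [Finset.sum_range_succ', pow_succ, Finset.sum_mul, pow_zero]
  have hu : ∀ t, u (t + 1) = u t ᵥ* M + fun _ => c := fun t => by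
    simp only [u, pow_succ, hgeom, vecMul_add, vecMul_one, ← vecMul_vecMul, add_vecMul, add_assoc]
  have hxu : ∀ t, x t ≤ u t := by
    intro t
    induction t with
    | zero => simp [u]
    | succ t ih =>
      intro j
      rw [hu]
      exact (hx t j).trans (add_le_add (vecMul_mono_left hM ih j) le_rfl)
  refine ⟨∑ i, |x 0 i| + ∑ _i : ι, c * C, fun t j => (hxu t j).trans (add_le_add ?_ ?_)⟩
  · refine Finset.sum_le_sum fun i _ => ?_
    exact (mul_le_mul_of_nonneg_right (le_abs_self _) (pow_apply_nonneg hM t i j)).trans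
      (mul_le_of_le_one_right (abs_nonneg _) (pow_apply_le_one hM hM₁ t i j))
  · exact Finset.sum_le_sum fun i _ => mul_le_mul_of_nonneg_left (hC t i j) hc

end Matrix

section FiniteValued

variable {Ω β : Type*} [MeasurableSpace Ω] [MeasurableSpace β] [MeasurableSingletonClass β]
  {P : Measure Ω} {X : Ω → β}

theorem integrable_comp_of_finite [Finite β] [IsFiniteMeasure P] (hX : Measurable X)
    (g : β → ℝ) : Integrable (fun ω => g (X ω)) P := by
  obtain ⟨C, hC⟩ := Finite.exists_le fun b => ‖g b‖
  exact .of_bound ((measurable_of_countable g).comp hX).aestronglyMeasurable C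
    (ae_of_all _ fun ω => hC (X ω))

theorem MeasureTheory.Integrable.mul_comp_of_finite [Finite β] {Y : Ω → ℝ} (hY : Integrable Y P)
    (hX : Measurable X) (g : β → ℝ) : Integrable (fun ω => Y ω * g (X ω)) P := by
  obtain ⟨C, hC⟩ := Finite.exists_le fun b => ‖g b‖
  exact hY.mul_bdd ((measurable_of_countable g).comp hX).aestronglyMeasurable
    (ae_of_all _ fun ω => hC (X ω))

theorem MeasureTheory.Integrable.comp_mul_of_finite [Finite β] {Y : Ω → ℝ} (hY : Integrable Y P)
    (hX : Measurable X) (g : β → ℝ) : Integrable (fun ω => g (X ω) * Y ω) P := by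
  obtain ⟨C, hC⟩ := Finite.exists_le fun b => ‖g b‖
  exact hY.bdd_mul ((measurable_of_countable g).comp hX).aestronglyMeasurable
    (ae_of_all _ fun ω => hC (X ω))

theorem integral_eq_sum_integral_mul_ite [Fintype β] [DecidableEq β] {Y : Ω → ℝ}
    (hY : Integrable Y P) (hX : Measurable X) :
    ∫ ω, Y ω ∂P = ∑ b, ∫ ω, Y ω * (if X ω = b then 1 else 0) ∂P := by
  rw [← integral_finsetSum _ fun b _ => hY.mul_comp_of_finite hX fun x => if x = b then 1 else 0]
  simp

end FiniteValued

section History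

variable {Ω S A : Type*} [MeasurableSpace S] [MeasurableSpace A] {St : ℕ → Ω → S}
  {At : ℕ → Ω → A}

theorem filtSA_mono : Monotone (filtSA St At) := fun t t' h =>
  sup_le_sup (biSup_mono fun k hk => by simp only [Finset.mem_range] at hk ⊢; omega)
    (biSup_mono fun k hk => by simp only [Finset.mem_range] at hk ⊢; omega)

theorem measurable_filtSA_state {k t : ℕ} (hk : k ≤ t) : Measurable[filtSA St At t] (St k) :=
  measurable_iff_comap_le.mpr <| le_sup_of_le_left <|
    le_iSup₂_of_le (f := fun k (_ : k ∈ Finset.range (t + 1)) => MeasurableSpace.comap (St k) _)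
      k (Finset.mem_range.mpr (Nat.lt_succ_of_le hk)) le_rfl

theorem measurable_filtSA_action {k t : ℕ} (hk : k < t) : Measurable[filtSA St At t] (At k) :=
  measurable_iff_comap_le.mpr <| le_sup_of_le_right <|
    le_iSup₂_of_le (f := fun k (_ : k ∈ Finset.range t) => MeasurableSpace.comap (At k) _)
      k (Finset.mem_range.mpr hk) le_rfl

theorem filtSA_le [MeasurableSpace Ω] (hS : ∀ t, Measurable (St t))
    (hA : ∀ t, Measurable (At t)) (t : ℕ) :
    filtSA St At t ≤ ‹MeasurableSpace Ω› :=
  sup_le (iSup₂_le fun k _ => (hS k).comap_le) (iSup₂_le fun k _ => (hA k).comap_le)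

variable [Finite S] [Finite A] [MeasurableSingletonClass S] [MeasurableSingletonClass A]

theorem measurable_filtSA_transition {β : Type*} [MeasurableSpace β] (g : S → A → S → β)
    (t : ℕ) : Measurable[filtSA St At (t + 1)] fun ω => g (St t ω) (At t ω) (St (t + 1) ω) :=
  (measurable_of_countable fun q : S × A × S => g q.1 q.2.1 q.2.2).comp <|
    (measurable_filtSA_state t.le_succ).prodMk
      ((measurable_filtSA_action t.lt_succ_self).prodMk (measurable_filtSA_state le_rfl))

variable {E : Type*} [NormedAddCommGroup E] [NormedSpace ℝ E] {X b : ℕ → Ω → E} {a : S → A → S → ℝ}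

theorem measurable_filtSA_of_succ_eq [MeasurableSpace E] [BorelSpace E]
    [SecondCountableTopology E]
    (hrec : ∀ t ω, X (t + 1) ω = a (St t ω) (At t ω) (St (t + 1) ω) • X t ω + b (t + 1) ω)
    (h₀ : Measurable[filtSA St At 0] (X 0))
    (hb : ∀ t, Measurable[filtSA St At (t + 1)] (b (t + 1))) (t : ℕ) :
    Measurable[filtSA St At t] (X t) := by
  induction t with
  | zero => exact h₀
  | succ t ih =>
    rw [funext (hrec t)]
    exact ((measurable_filtSA_transition a t).smul (ih.mono (filtSA_mono t.le_succ) le_rfl)).add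
      (hb t)

theorem integrable_of_succ_eq [MeasurableSpace Ω] {P : Measure Ω} (hS : ∀ t, Measurable (St t))
    (hA : ∀ t, Measurable (At t))
    (hrec : ∀ t ω, X (t + 1) ω = a (St t ω) (At t ω) (St (t + 1) ω) • X t ω + b (t + 1) ω)
    (h₀ : Integrable (X 0) P) (hb : ∀ t, Integrable (b (t + 1)) P) (t : ℕ) :
    Integrable (X t) P := by
  obtain ⟨C, hC⟩ := Finite.exists_le fun q : S × A × S => ‖a q.1 q.2.1 q.2.2‖
  induction t with
  | zero => exact h₀
  | succ t ih =>
    rw [funext (hrec t)]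
    refine (ih.bdd_smul (φ := fun ω => a (St t ω) (At t ω) (St (t + 1) ω)) C ?_
      (ae_of_all _ fun ω => hC (St t ω, At t ω, St (t + 1) ω))).add (hb t)
    exact ((measurable_filtSA_transition a t).mono (filtSA_le hS hA _) le_rfl).aestronglyMeasurable

end History

section Markov

variable {Ω S A : Type*} [Fintype S] [Fintype A] [MeasurableSpace S] [MeasurableSingletonClass S]
  [MeasurableSpace A] [MeasurableSingletonClass A] [MeasurableSpace Ω] {P : Measure Ω}
  [IsFiniteMeasure P] {p : S → A → S → ℝ} {pol polb : S → A → ℝ} {St : ℕ → Ω → S}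
  {At : ℕ → Ω → A}

theorem IsBehaviorChain.integral_mul_next (h : IsBehaviorChain p polb P St At) {t : ℕ}
    {Y : Ω → ℝ} (hYm : Measurable[filtSA St At t] Y) (hY : Integrable Y P) (f : A × S → ℝ) :
    ∫ ω, Y ω * f (At t ω, St (t + 1) ω) ∂P =
      ∫ ω, Y ω * ∑ a, ∑ s', polb (St t ω) a * p (St t ω) a s' * f (a, s') ∂P := by
  have hAS : Measurable fun ω => (At t ω, St (t + 1) ω) := (h.ameas t).prodMk (h.smeas (t + 1))
  rw [← integral_condExp (filtSA_le h.smeas h.ameas t)]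
  refine integral_congr_ae ?_
  filter_upwards [condExp_mul_of_stronglyMeasurable_left hYm.stronglyMeasurable
    (hY.mul_comp_of_finite hAS f) (integrable_comp_of_finite hAS f), h.markov t f] with ω h₁ h₂
  exact h₁.trans (congrArg (Y ω * ·) h₂)

theorem IsBehaviorChain.integral_mul_rho_mul_ite_succ [DecidableEq S]
    (h : IsBehaviorChain p polb P St At) (hρ : ∀ s a, polb s a * rho pol polb s a = pol s a)
    {t : ℕ} {G : Ω → ℝ} (hGm : Measurable[filtSA St At t] G) (hG : Integrable G P) (s' : S) :
    ∫ ω, G ω * rho pol polb (St t ω) (At t ω) * (if St (t + 1) ω = s' then 1 else 0) ∂P =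
      ∑ s, (∫ ω, G ω * (if St t ω = s then 1 else 0) ∂P) * Ppi p pol s s' := by
  have hAS : Measurable fun ω => (At t ω, St (t + 1) ω) := (h.ameas t).prodMk (h.smeas (t + 1))
  have hGs : ∀ s, Integrable (fun ω => G ω * if St t ω = s then 1 else 0) P := fun s =>
    hG.mul_comp_of_finite (h.smeas t) fun x => if x = s then 1 else 0
  have hGsm : ∀ s, Measurable[filtSA St At t] fun ω => G ω * if St t ω = s then 1 else 0 :=
    fun s => hGm.mul ((measurable_of_countable fun x => if x = s then (1 : ℝ) else 0).comp
      (measurable_filtSA_state le_rfl))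
  set f : S → A × S → ℝ := fun s q => rho pol polb s q.1 * if q.2 = s' then 1 else 0
  calc _ = ∑ s, ∫ ω, (G ω * if St t ω = s then 1 else 0) * f s (At t ω, St (t + 1) ω) ∂P := by
        rw [← integral_finsetSum _ fun s _ => (hGs s).mul_comp_of_finite hAS (f s)]
        congr 1 with ω
        simp [f, ite_mul, mul_ite]
    _ = ∑ s, ∫ ω, (G ω * if St t ω = s then 1 else 0) * Ppi p pol s s' ∂P := by
        refine Finset.sum_congr rfl fun s _ => ?_
        rw [h.integral_mul_next (hGsm s) (hGs s) (f s)]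
        congr 1 with ω
        by_cases hs : St t ω = s
        · simp [hs, f, Ppi, mul_ite, ← hρ, mul_comm, mul_left_comm]
        · simp [hs]
    _ = _ := by simp only [integral_mul_const]

end Markov

namespace MDPModel

variable {S A : Type*} [Fintype S] [Fintype A] [DecidableEq S] {p : S → A → S → ℝ}
  {pol polb : S → A → ℝ} {γf lamf ifun : S → ℝ}

theorem rho_nonneg (hm : MDPModel p pol polb γf lamf ifun) (s : S) (a : A) :
    0 ≤ rho pol polb s a :=
  div_nonneg (hm.pol_nonneg s a) (hm.polb_nonneg s a)

theorem polb_mul_rho (hm : MDPModel p pol polb γf lamf ifun) (s : S) (a : A) :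
    polb s a * rho pol polb s a = pol s a := by
  rcases (hm.polb_nonneg s a).eq_or_lt with h | h
  · have hpol : pol s a = 0 := by
      by_contra hne
      exact (hm.support s a ((hm.pol_nonneg s a).lt_of_ne' hne)).ne h
    simp [rho, ← h, hpol]
  · exact mul_div_cancel₀ _ h.ne'

theorem Ppi_mul_diagonal_apply_nonneg (hm : MDPModel p pol polb γf lamf ifun) (s s' : S) :
    0 ≤ (Ppi p pol * Matrix.diagonal γf) s s' := by
  rw [Matrix.mul_diagonal]
  exact mul_nonneg (Finset.sum_nonneg fun a _ => mul_nonneg (hm.pol_nonneg s a)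
    (hm.p_nonneg s a s')) (hm.gamma_mem s').1

theorem sum_Ppi_mul_diagonal_apply_le_one (hm : MDPModel p pol polb γf lamf ifun) (s : S) :
    ∑ s', (Ppi p pol * Matrix.diagonal γf) s s' ≤ 1 := by
  calc ∑ s', (Ppi p pol * Matrix.diagonal γf) s s' ≤ ∑ s', Ppi p pol s s' :=
        Finset.sum_le_sum fun s' _ => by
          rw [Matrix.mul_diagonal]
          exact mul_le_of_le_one_right (Finset.sum_nonneg fun a _ => mul_nonneg
            (hm.pol_nonneg s a) (hm.p_nonneg s a s')) (hm.gamma_mem s').2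
    _ = 1 := by simp [Ppi, Finset.sum_comm (γ := S), ← Finset.mul_sum, hm.p_sum, hm.pol_sum]

end MDPModel

section Discounted

open Matrix

variable {Ω S A : Type*} [Fintype S] [Fintype A] [DecidableEq S] [MeasurableSpace S]
  [MeasurableSingletonClass S] [MeasurableSpace A] [MeasurableSingletonClass A]
  [MeasurableSpace Ω] {P : Measure Ω} [IsFiniteMeasure P] {p : S → A → S → ℝ}
  {pol polb : S → A → ℝ} {γf lamf ifun : S → ℝ} {St : ℕ → Ω → S} {At : ℕ → Ω → A}

theorem MDPModel.exists_integral_le_of_le_discounted (hm : MDPModel p pol polb γf lamf ifun)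
    (hchain : IsBehaviorChain p polb P St At) {G R : ℕ → Ω → ℝ}
    (hGm : ∀ t, Measurable[filtSA St At t] (G t)) (hG : ∀ t, Integrable (G t) P)
    (hR₀ : ∀ t ω, 0 ≤ R t ω) (hR : ∀ t, Integrable (R t) P) {c : ℝ}
    (hRc : ∀ t, ∫ ω, R t ω ∂P ≤ c)
    (hrec : ∀ t ω, G (t + 1) ω ≤
      γf (St (t + 1) ω) * rho pol polb (St t ω) (At t ω) * G t ω + R (t + 1) ω) :
    ∃ D, ∀ t, ∫ ω, G t ω ∂P ≤ D := by
  set x : ℕ → S → ℝ := fun t s => ∫ ω, G t ω * (if St t ω = s then 1 else 0) ∂P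
  have hx : ∀ t s', x (t + 1) s' ≤ (x t ᵥ* (Ppi p pol * diagonal γf)) s' + c := by
    intro t s'
    have hρG : Integrable (fun ω => G t ω * rho pol polb (St t ω) (At t ω) *
        (if St (t + 1) ω = s' then 1 else 0)) P :=
      ((hG t).mul_comp_of_finite ((hchain.smeas t).prodMk (hchain.ameas t))
        fun q => rho pol polb q.1 q.2).mul_comp_of_finite (hchain.smeas (t + 1))
        fun s => if s = s' then 1 else 0
    calc x (t + 1) s' ≤ ∫ ω, γf s' * (G t ω * rho pol polb (St t ω) (At t ω) *
          (if St (t + 1) ω = s' then 1 else 0)) + R (t + 1) ω ∂P := by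
          refine integral_mono ((hG (t + 1)).mul_comp_of_finite (hchain.smeas (t + 1))
              fun s => if s = s' then 1 else 0)
            ((hρG.const_mul _).add (hR (t + 1))) fun ω => ?_
          by_cases hs : St (t + 1) ω = s'
          · have := hrec t ω
            simp only [hs, if_true, mul_one] at this ⊢
            linarith
          · simpa [hs] using hR₀ (t + 1) ω
      _ ≤ γf s' * ∑ s, x t s * Ppi p pol s s' + c := by
          rw [integral_add (hρG.const_mul _) (hR (t + 1)), integral_const_mul,
            hchain.integral_mul_rho_mul_ite_succ hm.polb_mul_rho (hGm t) (hG t)]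
          exact add_le_add le_rfl (hRc (t + 1))
      _ = (x t ᵥ* (Ppi p pol * diagonal γf)) s' + c := by
          simp only [vecMul, dotProduct, mul_diagonal, Finset.mul_sum]
          congr 1
          exact Finset.sum_congr rfl fun s _ => by ring
  obtain ⟨D, hD⟩ := exists_forall_le_of_le_vecMul_add hm.Ppi_mul_diagonal_apply_nonneg
    hm.sum_Ppi_mul_diagonal_apply_le_one hm.inv ((integral_nonneg (hR₀ 0)).trans (hRc 0)) hx
  refine ⟨∑ _s : S, D, fun t => ?_⟩
  rw [integral_eq_sum_integral_mul_ite (hG t) (hchain.smeas t)]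
  exact Finset.sum_le_sum fun s _ => hD t s

end Discounted

namespace IsTrace

variable {Ω S A : Type*} [Fintype S] [Fintype A] {n : ℕ} {p : S → A → S → ℝ}
  {pol polb : S → A → ℝ} {γf lamf ifun : S → ℝ} {φ : S → Fin n → ℝ} {St : ℕ → Ω → S}
  {At : ℕ → Ω → A} {e : ℕ → Ω → Fin n → ℝ} {F : ℕ → Ω → ℝ} {e0 : Fin n → ℝ} {F0 : ℝ}

theorem F_nonneg [DecidableEq S] (htr : IsTrace pol polb γf lamf ifun φ St At e F e0 F0)
    (hm : MDPModel p pol polb γf lamf ifun) (hF0 : 0 ≤ F0) (t : ℕ) (ω : Ω) : 0 ≤ F t ω := by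
  induction t with
  | zero => rw [htr.init_F]; exact hF0
  | succ t ih =>
    rw [htr.rec_F]
    exact add_nonneg (mul_nonneg (mul_nonneg (hm.gamma_mem _).1 (hm.rho_nonneg _ _)) ih)
      (hm.interest_nonneg _)

theorem norm_e_succ_le [DecidableEq S] (htr : IsTrace pol polb γf lamf ifun φ St At e F e0 F0)
    (hm : MDPModel p pol polb γf lamf ifun) (hF0 : 0 ≤ F0) (t : ℕ) (ω : Ω) :
    ‖e (t + 1) ω‖ ≤ γf (St (t + 1) ω) * rho pol polb (St t ω) (At t ω) * ‖e t ω‖ +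
      (ifun (St (t + 1) ω) + F (t + 1) ω) * ‖φ (St (t + 1) ω)‖ := by
  obtain ⟨hl₀, hl₁⟩ := hm.lambda_mem (St (t + 1) ω)
  have hγρ := mul_nonneg (hm.gamma_mem (St (t + 1) ω)).1 (hm.rho_nonneg (St t ω) (At t ω))
  have hi := hm.interest_nonneg (St (t + 1) ω)
  have hF := htr.F_nonneg hm hF0 (t + 1) ω
  rw [htr.rec_e, mul_assoc]
  refine (norm_add_le _ _).trans (add_le_add ?_ ?_) <;> rw [norm_smul, Real.norm_eq_abs]
  · rw [abs_of_nonneg (mul_nonneg hl₀ hγρ)]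
    exact mul_le_mul_of_nonneg_right (mul_le_of_le_one_left hγρ hl₁) (norm_nonneg _)
  · rw [abs_of_nonneg (by nlinarith)]
    exact mul_le_mul_of_nonneg_right (by nlinarith) (norm_nonneg _)

variable [MeasurableSpace S] [MeasurableSingletonClass S] [MeasurableSpace A]
  [MeasurableSingletonClass A]

theorem measurable_F (htr : IsTrace pol polb γf lamf ifun φ St At e F e0 F0) (t : ℕ) :
    Measurable[filtSA St At t] (F t) :=
  measurable_filtSA_of_succ_eq (a := fun s a s' => γf s' * rho pol polb s a)
    (b := fun t ω => ifun (St t ω)) htr.rec_F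
    (by rw [funext htr.init_F]; exact measurable_const)
    (fun t => (measurable_of_countable ifun).comp (measurable_filtSA_state le_rfl)) t

theorem measurable_e (htr : IsTrace pol polb γf lamf ifun φ St At e F e0 F0) (t : ℕ) :
    Measurable[filtSA St At t] (e t) := by
  refine measurable_filtSA_of_succ_eq (a := fun s a s' => lamf s' * γf s' * rho pol polb s a)
    (b := fun t ω => (lamf (St t ω) * ifun (St t ω) + (1 - lamf (St t ω)) * F t ω) • φ (St t ω))
    htr.rec_e (by rw [funext htr.init_e]; exact measurable_const) (fun t => ?_) t
  have hS : Measurable[filtSA St At (t + 1)] (St (t + 1)) := measurable_filtSA_state le_rfl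
  exact (((measurable_of_countable fun s => lamf s * ifun s).comp hS).add
    (((measurable_of_countable fun s => 1 - lamf s).comp hS).mul (htr.measurable_F (t + 1)))).smul
    ((measurable_of_countable φ).comp hS)

variable [MeasurableSpace Ω] {P : Measure Ω} [IsFiniteMeasure P]

theorem integrable_F (htr : IsTrace pol polb γf lamf ifun φ St At e F e0 F0)
    (hchain : IsBehaviorChain p polb P St At) (t : ℕ) : Integrable (F t) P :=
  integrable_of_succ_eq (a := fun s a s' => γf s' * rho pol polb s a)
    (b := fun t ω => ifun (St t ω)) hchain.smeas hchain.ameas htr.rec_F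
    (by rw [funext htr.init_F]; exact integrable_const _)
    (fun t => integrable_comp_of_finite (hchain.smeas (t + 1)) ifun) t

theorem integrable_e (htr : IsTrace pol polb γf lamf ifun φ St At e F e0 F0)
    (hchain : IsBehaviorChain p polb P St At) (t : ℕ) : Integrable (e t) P := by
  refine integrable_of_succ_eq (a := fun s a s' => lamf s' * γf s' * rho pol polb s a)
    (b := fun t ω => (lamf (St t ω) * ifun (St t ω) + (1 - lamf (St t ω)) * F t ω) • φ (St t ω))
    hchain.smeas hchain.ameas htr.rec_e (by rw [funext htr.init_e]; exact integrable_const _)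
    (fun t => ?_) t
  have hS := hchain.smeas (t + 1)
  obtain ⟨C, hC⟩ := Finite.exists_le fun s => ‖φ s‖
  exact ((integrable_comp_of_finite hS fun s => lamf s * ifun s).add
    ((htr.integrable_F hchain (t + 1)).comp_mul_of_finite hS fun s => 1 - lamf s)).smul_bdd C
    ((measurable_of_countable φ).comp hS).aestronglyMeasurable (ae_of_all _ fun ω => hC _)

theorem exists_integral_F_le [DecidableEq S]
    (htr : IsTrace pol polb γf lamf ifun φ St At e F e0 F0)
    (hm : MDPModel p pol polb γf lamf ifun) (hchain : IsBehaviorChain p polb P St At) :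
    ∃ D, ∀ t, ∫ ω, F t ω ∂P ≤ D :=
  hm.exists_integral_le_of_le_discounted hchain htr.measurable_F (htr.integrable_F hchain)
    (fun t ω => hm.interest_nonneg (St t ω))
    (fun t => integrable_comp_of_finite (hchain.smeas t) ifun)
    (fun t => integral_mono (integrable_comp_of_finite (hchain.smeas t) ifun)
      (integrable_const (∑ s, ifun s)) fun ω =>
        Finset.single_le_sum (fun s _ => hm.interest_nonneg s) (Finset.mem_univ (St t ω)))
    fun t ω => (htr.rec_F t ω).le

theorem exists_integral_norm_e_le [DecidableEq S]
    (htr : IsTrace pol polb γf lamf ifun φ St At e F e0 F0)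
    (hm : MDPModel p pol polb γf lamf ifun) (hchain : IsBehaviorChain p polb P St At)
    (hF0 : 0 ≤ F0) : ∃ D, ∀ t, ∫ ω, ‖e t ω‖ ∂P ≤ D := by
  obtain ⟨DF, hDF⟩ := htr.exists_integral_F_le hm hchain
  set iC := ∑ s, ifun s
  set Φ := ∑ s, ‖φ s‖
  have hi : ∀ s, ifun s ≤ iC := fun s =>
    Finset.single_le_sum (fun s _ => hm.interest_nonneg s) (Finset.mem_univ s)
  have hΦ : ∀ s, ‖φ s‖ ≤ Φ := fun s =>
    Finset.single_le_sum (fun s _ => norm_nonneg (φ s)) (Finset.mem_univ s)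
  have hiC₀ : 0 ≤ iC := Finset.sum_nonneg fun s _ => hm.interest_nonneg s
  have hΦ₀ : 0 ≤ Φ := Finset.sum_nonneg fun s _ => norm_nonneg (φ s)
  have hR : ∀ t, Integrable (fun ω => (iC + F t ω) * Φ) P := fun t =>
    ((integrable_const iC).add (htr.integrable_F hchain t)).mul_const Φ
  refine hm.exists_integral_le_of_le_discounted hchain
    (fun t => measurable_norm.comp (htr.measurable_e t)) (fun t => (htr.integrable_e hchain t).norm)
    (fun t ω => mul_nonneg (add_nonneg hiC₀ (htr.F_nonneg hm hF0 t ω)) hΦ₀) hR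
    (c := (∫ _ω, iC ∂P + DF) * Φ) (fun t => ?_)
    fun t ω => (htr.norm_e_succ_le hm hF0 t ω).trans (add_le_add le_rfl ?_)
  · rw [integral_mul_const, integral_add (integrable_const iC) (htr.integrable_F hchain t)]
    exact mul_le_mul_of_nonneg_right (add_le_add le_rfl (hDF t)) hΦ₀
  · exact mul_le_mul (add_le_add (hi _) le_rfl) (hΦ _) (norm_nonneg _)
      (add_nonneg hiC₀ (htr.F_nonneg hm hF0 (t + 1) ω))

end IsTrace

theorem stmt2_general
    {S A : Type} [Fintype S] [Fintype A] [DecidableEq S]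
    [MeasurableSpace S] [MeasurableSingletonClass S]
    [MeasurableSpace A] [MeasurableSingletonClass A]
    (p : S → A → S → ℝ) (pol polb : S → A → ℝ) (γf lamf ifun : S → ℝ)
    (hmodel : MDPModel p pol polb γf lamf ifun)
    (n : ℕ) (φ : S → Fin n → ℝ)
    (Ω : Type) [MeasurableSpace Ω] (P : Measure Ω) [IsProbabilityMeasure P]
    (St : ℕ → Ω → S) (At : ℕ → Ω → A)
    (hchain : IsBehaviorChain p polb P St At)
    (e : ℕ → Ω → Fin n → ℝ) (F : ℕ → Ω → ℝ) (e0 : Fin n → ℝ) (F0 : ℝ) (hF0 : 0 ≤ F0)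
    (htrace : IsTrace pol polb γf lamf ifun φ St At e F e0 F0) :
    (⨆ t : ℕ, ∫⁻ ω, ↑‖(e t ω, F t ω)‖₊ ∂P) < ⊤ := by
  obtain ⟨De, hDe⟩ := htrace.exists_integral_norm_e_le hmodel hchain hF0
  obtain ⟨DF, hDF⟩ := htrace.exists_integral_F_le hmodel hchain
  have hF := htrace.F_nonneg hmodel hF0
  refine (iSup_le fun t => ?_).trans_lt (ENNReal.ofReal_lt_top (r := De + DF))
  have he := (htrace.integrable_e hchain t).norm
  calc ∫⁻ ω, ↑‖(e t ω, F t ω)‖₊ ∂P ≤ ∫⁻ ω, ENNReal.ofReal (‖e t ω‖ + F t ω) ∂P :=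
        lintegral_mono fun ω => by
          rw [← enorm_eq_nnnorm, ← ofReal_norm, Prod.norm_def, Real.norm_of_nonneg (hF t ω)]
          exact ENNReal.ofReal_le_ofReal (max_le (le_add_of_nonneg_right (hF t ω))
            (le_add_of_nonneg_left (norm_nonneg _)))
    _ = ENNReal.ofReal (∫ ω, ‖e t ω‖ + F t ω ∂P) :=
        (ofReal_integral_eq_lintegral_ofReal (he.add (htrace.integrable_F hchain t))
          (ae_of_all _ fun ω => add_nonneg (norm_nonneg _) (hF t ω))).symm
    _ ≤ ENNReal.ofReal (De + DF) := by
        rw [integral_add he (htrace.integrable_F hchain t)]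
        exact ENNReal.ofReal_le_ofReal (add_le_add (hDe t) (hDF t))

/-- Under Assumption 1, for any given initial condition `(e0, F0)`,
the emphatic trace iterates satisfy `sup_{t≥0} 𝔼[‖(e_t, F_t)‖] < ∞`
(with the ℓ∞ norm on `ℝ^n × ℝ`). -/
theorem stmt2
    {S A : Type} [Fintype S] [Nonempty S] [Fintype A] [Nonempty A] [DecidableEq S]
    [MeasurableSpace S] [MeasurableSingletonClass S]
    [MeasurableSpace A] [MeasurableSingletonClass A]
    (p : S → A → S → ℝ) (pol polb : S → A → ℝ) (γf lamf ifun : S → ℝ)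
    (hmodel : MDPModel p pol polb γf lamf ifun)
    (n : ℕ) (hn : 1 ≤ n) (φ : S → Fin n → ℝ)
    (Ω : Type) [MeasurableSpace Ω] (P : Measure Ω) [IsProbabilityMeasure P]
    (St : ℕ → Ω → S) (At : ℕ → Ω → A)
    (hchain : IsBehaviorChain p polb P St At)
    (e : ℕ → Ω → Fin n → ℝ) (F : ℕ → Ω → ℝ) (e0 : Fin n → ℝ) (F0 : ℝ) (hF0 : 0 ≤ F0)
    (htrace : IsTrace pol polb γf lamf ifun φ St At e F e0 F0) :
    (⨆ t : ℕ, ∫⁻ ω, ↑‖(e t ω, F t ω)‖₊ ∂P) < ⊤ :=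
  stmt2_general p pol polb γf lamf ifun hmodel n φ Ω P St At hchain e F e0 F0 hF0 htrace
end

section
/- Let J₀ = {s ∈ S : M̄_ss = 0} and let E ⊆ ℝ^S be the column space of Φ. Consider the condition (★): every v ∈ E with v(s) = 0 for all s ∉ J₀ is the zero vector. If (★) holds, then the matrix C = −ΦᵀM̄(I−Q)Φ is negative definite: there exists c > 0 such that yᵀCy ≤ −c‖y‖₂² for all y ∈ ℝ^n. Furthermore, C is nonsingular if and only if condition (★) holds. -/
open Matrix

noncomputable section

/-- `Q = I − (I−PΓΛ)⁻¹(I−PΓ)`. -/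
def Qof {S : Type*} [Fintype S] [DecidableEq S]
    (P : Matrix S S ℝ) (γf lamf : S → ℝ) : Matrix S S ℝ :=
  1 - (1 - P * Matrix.diagonal γf * Matrix.diagonal lamf)⁻¹ * (1 - P * Matrix.diagonal γf)

/-- The diagonal vector of `M̄`: `(d_i)ᵀ(I−Q)⁻¹`, with `d_i(s) = d(s)·i(s)`. -/
def MdiagOf {S : Type*} [Fintype S] [DecidableEq S]
    (P : Matrix S S ℝ) (γf lamf d ifun : S → ℝ) : S → ℝ :=
  Matrix.vecMul (fun s => d s * ifun s) (1 - Qof P γf lamf)⁻¹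

/-- `C = −ΦᵀM̄(I−Q)Φ`. -/
def Cof {S : Type*} [Fintype S] [DecidableEq S] {n : ℕ}
    (P : Matrix S S ℝ) (γf lamf d ifun : S → ℝ)
    (Φ : Matrix S (Fin n) ℝ) : Matrix (Fin n) (Fin n) ℝ :=
  -(Φ.transpose * Matrix.diagonal (MdiagOf P γf lamf d ifun) * (1 - Qof P γf lamf) * Φ)

end

/-!
`Q = (I - PΓΛ)⁻¹(PΓ - PΓΛ)` is entrywise nonnegative with row sums at most `1`, and for a
nonnegative substochastic `X` with `I - X` invertible, `(I - X)⁻¹ ≥ 0` as the limit, as `r → 1⁻`,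
of the Neumann series of `(I - rX)⁻¹`. Hence `m = d_i (I - Q)⁻¹ ≥ 0`, and `m (I - Q) = d_i` gives,
for `W = diag(m) (I - Q)`,
  `2 zᵀWz = ∑ₛ mₛ ((1 - ∑ₜ Qₛₜ) zₛ² + ∑ₜ Qₛₜ (zₛ - zₜ)²) + ∑ₛ d_i(s) zₛ² ≥ 0`.
Since `m ≥ m Q`, no transition of `Q` leaves the support of `m`; so if `zᵀWz = 0`, then
`w = 1_{m ≠ 0} z²` satisfies `(I - Q) w ≤ 0`, and inverse positivity gives `w = 0`, i.e. `z`
vanishes on the support of `m`.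
Conversely such `z` lie in the kernel of `W`. As `yᵀCy = -(Φy)ᵀW(Φy)`, condition (★) makes
`yᵀCy < 0` for `y ≠ 0`, uniformly by compactness of the unit sphere; without (★) some `x` with
`Φx ≠ 0` has `Cx = 0`.
-/

open Filter Metric

lemma exists_pos_mul_sq_norm_le {E : Type*} [NormedAddCommGroup E] [NormedSpace ℝ E]
    [ProperSpace E] {q : E → ℝ} (hq : Continuous q) (hsmul : ∀ (r : ℝ) x, q (r • x) = r ^ 2 * q x)
    (hpos : ∀ x ≠ 0, 0 < q x) : ∃ c > 0, ∀ x, c * ‖x‖ ^ 2 ≤ q x := by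
  rcases subsingleton_or_nontrivial E with hE | hE
  · refine ⟨1, one_pos, fun x => ?_⟩
    simpa [Subsingleton.elim x 0] using (hsmul 0 0).ge
  obtain ⟨x₀, hx₀, hmin⟩ := (isCompact_sphere (0 : E) 1).exists_isMinOn
    (NormedSpace.sphere_nonempty.mpr zero_le_one) hq.continuousOn
  have hx₀ne : x₀ ≠ 0 := ne_zero_of_mem_unit_sphere ⟨x₀, hx₀⟩
  refine ⟨q x₀, hpos x₀ hx₀ne, fun x => ?_⟩
  rcases eq_or_ne x 0 with rfl | hx
  · simpa using (hsmul 0 0).ge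
  have hu : ‖x‖⁻¹ • x ∈ sphere (0 : E) 1 := by
    simp [norm_smul, hx]
  calc q x₀ * ‖x‖ ^ 2 ≤ q (‖x‖⁻¹ • x) * ‖x‖ ^ 2 := by gcongr; exact hmin hu
    _ = q x := by rw [hsmul]; field_simp

lemma Matrix.exists_pos_mul_dotProduct_self_le {ι : Type*} [Fintype ι] (A : Matrix ι ι ℝ)
    (hA : ∀ y ≠ 0, 0 < y ⬝ᵥ A *ᵥ y) : ∃ c > 0, ∀ y, c * (y ⬝ᵥ y) ≤ y ⬝ᵥ A *ᵥ y := by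
  obtain ⟨c, hc, hle⟩ := exists_pos_mul_sq_norm_le (E := EuclideanSpace ℝ ι)
    (q := fun v => v.ofLp ⬝ᵥ A *ᵥ v.ofLp) (by fun_prop)
    (fun r v => by
      simp only [WithLp.ofLp_smul, mulVec_smul, dotProduct_smul, smul_dotProduct, smul_eq_mul]
      ring)
    (fun v hv => hA _ (by simpa using hv))
  refine ⟨c, hc, fun y => ?_⟩
  have hnorm : ‖WithLp.toLp 2 y‖ ^ 2 = y ⬝ᵥ y := by
    rw [EuclideanSpace.real_norm_sq_eq]; simp [dotProduct, sq]
  simpa [hnorm] using hle (WithLp.toLp 2 y)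

lemma Matrix.isUnit_of_forall_dotProduct_mulVec_pos {ι : Type*} [Fintype ι] [DecidableEq ι]
    {A : Matrix ι ι ℝ} (hA : ∀ y ≠ 0, 0 < y ⬝ᵥ A *ᵥ y) : IsUnit A := by
  refine mulVec_injective_iff_isUnit.mp fun x y hxy => ?_
  by_contra hne
  have hzero : A *ᵥ (x - y) = 0 := by rw [mulVec_sub, hxy, sub_self]
  simpa [hzero] using hA (x - y) (sub_ne_zero.mpr hne)

lemma Matrix.dotProduct_transpose_mul_mul_mulVec {S ι : Type*} [Fintype S] [Fintype ι]
    (Φ : Matrix S ι ℝ) (W : Matrix S S ℝ) (y : ι → ℝ) :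
    y ⬝ᵥ (Φᵀ * W * Φ) *ᵥ y = (Φ *ᵥ y) ⬝ᵥ W *ᵥ (Φ *ᵥ y) := by
  rw [← mulVec_mulVec, ← mulVec_mulVec, dotProduct_mulVec, vecMul_transpose]

lemma one_sub_sum_mul_sq_add_sum_mul_sq_nonneg {ι : Type*} [Fintype ι] {q : ι → ℝ} (hq : 0 ≤ q)
    (hq1 : ∑ t, q t ≤ 1) (a : ℝ) (z : ι → ℝ) :
    0 ≤ (1 - ∑ t, q t) * a ^ 2 + ∑ t, q t * (a - z t) ^ 2 :=
  add_nonneg (mul_nonneg (sub_nonneg.mpr hq1) (sq_nonneg a))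
    (Finset.sum_nonneg fun t _ => mul_nonneg (hq t) (sq_nonneg _))

lemma sq_eq_sum_mul_sq_of_one_sub_sum_mul_sq_add_sum_mul_sq_eq_zero {ι : Type*} [Fintype ι]
    {q : ι → ℝ} (hq : 0 ≤ q) (hq1 : ∑ t, q t ≤ 1) {a : ℝ} {z : ι → ℝ}
    (h : (1 - ∑ t, q t) * a ^ 2 + ∑ t, q t * (a - z t) ^ 2 = 0) :
    a ^ 2 = ∑ t, q t * z t ^ 2 := by
  have hjump_nonneg : ∀ t ∈ Finset.univ, 0 ≤ q t * (a - z t) ^ 2 := fun t _ =>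
    mul_nonneg (hq t) (sq_nonneg _)
  have hleak : 0 ≤ (1 - ∑ t, q t) * a ^ 2 := mul_nonneg (sub_nonneg.mpr hq1) (sq_nonneg a)
  have hjump : ∑ t, q t * (a - z t) ^ 2 = 0 := by
    linarith [Finset.sum_nonneg hjump_nonneg]
  have hflat : ∀ t, q t * z t ^ 2 = q t * a ^ 2 := fun t => by
    rcases mul_eq_zero.mp ((Finset.sum_eq_zero_iff_of_nonneg hjump_nonneg).mp hjump t
      (Finset.mem_univ t)) with hqt | hzt
    · rw [hqt, zero_mul, zero_mul]
    · rw [sub_eq_zero.mp (pow_eq_zero_iff two_ne_zero |>.mp hzt)]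
  rw [Finset.sum_congr rfl fun t _ => hflat t, ← Finset.sum_mul]
  linarith

section
variable {S : Type*} [Fintype S] [DecidableEq S]

attribute [local instance] Matrix.linftyOpNormedRing Matrix.linftyOpNormedAlgebra in
lemma Matrix.linfty_opNorm_le_one {X : Matrix S S ℝ} (hX : ∀ s t, 0 ≤ X s t)
    (hrow : ∀ s, ∑ t, X s t ≤ 1) : ‖X‖ ≤ 1 := by
  rw [linfty_opNorm_def]
  norm_cast
  refine Finset.sup_le fun s _ => ?_
  rw [← NNReal.coe_le_coe]
  push_cast
  simpa [Real.norm_of_nonneg (hX s _)] using hrow s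

attribute [local instance] Matrix.linftyOpNormedRing Matrix.linftyOpNormedAlgebra in
lemma Matrix.ringInverse_one_sub_apply_nonneg {Y : Matrix S S ℝ} (hY : ∀ s t, 0 ≤ Y s t)
    (hnorm : ‖Y‖ < 1) (s t : S) : 0 ≤ Ring.inverse (1 - Y) s t := by
  have hrow := Pi.hasSum.mp (hasSum_geom_series_inverse Y hnorm) s
  exact (Pi.hasSum.mp hrow t).nonneg fun k => pow_apply_nonneg hY k s t

attribute [local instance] Matrix.linftyOpNormedRing Matrix.linftyOpNormedAlgebra in
lemma Matrix.inv_one_sub_apply_nonneg {X : Matrix S S ℝ} (hX : ∀ s t, 0 ≤ X s t)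
    (hrow : ∀ s, ∑ t, X s t ≤ 1) (hunit : IsUnit (1 - X)) (s t : S) :
    0 ≤ (1 - X)⁻¹ s t := by
  have hscaled : ∀ r ∈ Set.Ioo (0 : ℝ) 1, 0 ≤ Ring.inverse (1 - r • X) s t := by
    rintro r ⟨hr0, hr1⟩
    refine ringInverse_one_sub_apply_nonneg (Y := r • X)
      (fun s t => mul_nonneg hr0.le (hX s t)) ?_ s t
    rw [norm_smul, Real.norm_of_nonneg hr0.le]
    nlinarith [norm_nonneg X, linfty_opNorm_le_one hX hrow]
  obtain ⟨u, hu⟩ := hunit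
  have hcont : ContinuousAt (fun r : ℝ => Ring.inverse (1 - r • X) s t) 1 := by
    have hinv : ContinuousAt Ring.inverse (1 - (1 : ℝ) • X) := by
      rw [one_smul, ← hu]; exact NormedRing.inverse_continuousAt u
    exact ((continuous_apply t).comp (continuous_apply s)).continuousAt.comp
      (hinv.comp (f := fun r : ℝ => 1 - r • X) (by fun_prop))
  have hlim := hcont.tendsto.mono_left (nhdsWithin_le_nhds (s := Set.Iio 1))
  rw [one_smul, ← nonsing_inv_eq_ringInverse] at hlim
  exact ge_of_tendsto hlim (eventually_of_mem (Ioo_mem_nhdsLT zero_lt_one) hscaled)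

lemma Matrix.nonpos_of_mulVec_nonpos {A : Matrix S S ℝ} (hA : IsUnit A)
    (hinv : ∀ s t, 0 ≤ A⁻¹ s t) {v : S → ℝ} (hv : A *ᵥ v ≤ 0) : v ≤ 0 := by
  intro s
  rw [← one_mulVec v, ← nonsing_inv_mul A ((isUnit_iff_isUnit_det A).mp hA), ← mulVec_mulVec]
  exact Finset.sum_nonpos fun t _ => mul_nonpos_of_nonneg_of_nonpos (hinv s t) (hv t)

lemma Matrix.mul_diagonal_apply_nonneg {P : Matrix S S ℝ} (hP : ∀ s t, 0 ≤ P s t) {γ : S → ℝ}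
    (hγ : ∀ t, 0 ≤ γ t) (s t : S) : 0 ≤ (P * diagonal γ) s t := by
  rw [mul_diagonal]; exact mul_nonneg (hP s t) (hγ t)

lemma Matrix.mul_diagonal_apply_le {P : Matrix S S ℝ} (hP : ∀ s t, 0 ≤ P s t) {γ : S → ℝ}
    (hγ : ∀ t, γ t ≤ 1) (s t : S) : (P * diagonal γ) s t ≤ P s t := by
  rw [mul_diagonal]; exact mul_le_of_le_one_right (hP s t) (hγ t)

lemma Matrix.sum_one_sub_apply (M : Matrix S S ℝ) (s : S) :
    ∑ t, (1 - M) s t = 1 - ∑ t, M s t := by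
  simp [sub_apply, one_apply, Finset.sum_sub_distrib]

section
variable {A X : Matrix S S ℝ}

lemma Matrix.one_sub_inv_one_sub_mul_one_sub (hunit : IsUnit (1 - X)) :
    1 - (1 - X)⁻¹ * (1 - A) = (1 - X)⁻¹ * (A - X) := by
  rw [← sub_sub_sub_cancel_left X A 1, Matrix.mul_sub (1 - X)⁻¹ (1 - X),
    nonsing_inv_mul _ ((isUnit_iff_isUnit_det _).mp hunit)]

lemma Matrix.one_sub_inv_one_sub_mul_one_sub_apply_nonneg (hunit : IsUnit (1 - X))
    (hinv : ∀ s t, 0 ≤ (1 - X)⁻¹ s t) (hXA : ∀ s t, X s t ≤ A s t) (s t : S) :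
    0 ≤ (1 - (1 - X)⁻¹ * (1 - A)) s t := by
  rw [one_sub_inv_one_sub_mul_one_sub hunit, mul_apply]
  exact Finset.sum_nonneg fun u _ => mul_nonneg (hinv s u) (sub_nonneg.mpr (hXA u t))

lemma Matrix.sum_one_sub_inv_one_sub_mul_one_sub_apply_le_one (hinv : ∀ s t, 0 ≤ (1 - X)⁻¹ s t)
    (hA : ∀ s, ∑ t, A s t ≤ 1) (s : S) : ∑ t, (1 - (1 - X)⁻¹ * (1 - A)) s t ≤ 1 := by
  rw [sum_one_sub_apply, sub_le_self_iff]
  simp only [mul_apply]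
  rw [Finset.sum_comm]
  simp only [← Finset.mul_sum, sum_one_sub_apply]
  exact Finset.sum_nonneg fun u _ => mul_nonneg (hinv s u) (sub_nonneg.mpr (hA u))

end

end

section
variable {S : Type*} [Fintype S] [DecidableEq S] {Q : Matrix S S ℝ} {m e : S → ℝ}

lemma Matrix.dotProduct_diagonal_mul_one_sub_mulVec (z : S → ℝ) :
    z ⬝ᵥ (diagonal m * (1 - Q)) *ᵥ z
      = ∑ s, m s * z s ^ 2 - ∑ s, ∑ t, m s * Q s t * (z s * z t) := by
  rw [← mulVec_mulVec, sub_mulVec, one_mulVec, dotProduct, ← Finset.sum_sub_distrib]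
  refine Finset.sum_congr rfl fun s _ => ?_
  rw [mulVec_diagonal]
  simp only [Pi.sub_apply, mulVec, dotProduct]
  rw [mul_sub, mul_sub, Finset.mul_sum, Finset.mul_sum]
  congr 1
  · ring
  · exact Finset.sum_congr rfl fun t _ => by ring

lemma Matrix.apply_eq_sub_sum_of_vecMul_one_sub (hme : m ᵥ* (1 - Q) = e) (t : S) :
    e t = m t - ∑ s, m s * Q s t := by
  rw [← hme, vecMul_sub, vecMul_one]; rfl

lemma Matrix.two_mul_dotProduct_diagonal_mul_one_sub_mulVec (hme : m ᵥ* (1 - Q) = e)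
    (z : S → ℝ) :
    2 * (z ⬝ᵥ (diagonal m * (1 - Q)) *ᵥ z)
      = ∑ s, m s * ((1 - ∑ t, Q s t) * z s ^ 2 + ∑ t, Q s t * (z s - z t) ^ 2)
        + ∑ s, e s * z s ^ 2 := by
  have hcol : ∑ t, e t * z t ^ 2 = ∑ t, m t * z t ^ 2 - ∑ s, ∑ t, m s * Q s t * z t ^ 2 := by
    rw [Finset.sum_comm, ← Finset.sum_sub_distrib]
    refine Finset.sum_congr rfl fun t _ => ?_
    rw [apply_eq_sub_sum_of_vecMul_one_sub hme, sub_mul, Finset.sum_mul]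
  have hrow : ∑ s, m s * (1 - ∑ t, Q s t) * z s ^ 2
      = ∑ s, m s * z s ^ 2 - ∑ s, ∑ t, m s * Q s t * z s ^ 2 := by
    rw [← Finset.sum_sub_distrib]
    refine Finset.sum_congr rfl fun s _ => ?_
    rw [mul_sub, mul_one, Finset.mul_sum, sub_mul, Finset.sum_mul]
  have hsq : ∑ s, ∑ t, m s * Q s t * (z s - z t) ^ 2
      = ∑ s, ∑ t, m s * Q s t * z s ^ 2 - 2 * ∑ s, ∑ t, m s * Q s t * (z s * z t)
        + ∑ s, ∑ t, m s * Q s t * z t ^ 2 := by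
    simp only [Finset.mul_sum, ← Finset.sum_sub_distrib, ← Finset.sum_add_distrib]
    exact Finset.sum_congr rfl fun s _ => Finset.sum_congr rfl fun t _ => by ring
  have hgroup : ∑ s, m s * ((1 - ∑ t, Q s t) * z s ^ 2 + ∑ t, Q s t * (z s - z t) ^ 2)
      = ∑ s, m s * (1 - ∑ t, Q s t) * z s ^ 2 + ∑ s, ∑ t, m s * Q s t * (z s - z t) ^ 2 := by
    simp only [mul_add, Finset.sum_add_distrib, Finset.mul_sum, mul_assoc]
  rw [dotProduct_diagonal_mul_one_sub_mulVec, hgroup, hrow, hcol, hsq]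
  ring

lemma Matrix.apply_ne_zero_of_vecMul_one_sub (hQ : ∀ s t, 0 ≤ Q s t) (hm : 0 ≤ m) (he : 0 ≤ e)
    (hme : m ᵥ* (1 - Q) = e) {s t : S} (hs : m s ≠ 0) (hst : Q s t ≠ 0) : m t ≠ 0 := by
  have hflow : m s * Q s t ≤ ∑ u, m u * Q u t :=
    Finset.single_le_sum (fun u _ => mul_nonneg (hm u) (hQ u t)) (Finset.mem_univ s)
  have hpos : 0 < m s * Q s t := mul_pos ((hm s).lt_of_ne' hs) ((hQ s t).lt_of_ne' hst)
  have hmt := apply_eq_sub_sum_of_vecMul_one_sub hme t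
  have het : 0 ≤ e t := he t
  intro hzero
  linarith

lemma Matrix.diagonal_mul_one_sub_mulVec_eq_zero (hQ : ∀ s t, 0 ≤ Q s t) (hm : 0 ≤ m)
    (he : 0 ≤ e) (hme : m ᵥ* (1 - Q) = e) {z : S → ℝ} (hz : ∀ s, m s ≠ 0 → z s = 0) :
    (diagonal m * (1 - Q)) *ᵥ z = 0 := by
  ext s
  rw [← mulVec_mulVec, mulVec_diagonal, Pi.zero_apply, mul_eq_zero, or_iff_not_imp_left]
  intro hs
  rw [sub_mulVec, one_mulVec, Pi.sub_apply, hz s hs, zero_sub, neg_eq_zero]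
  refine Finset.sum_eq_zero fun t _ => show Q s t * z t = 0 from ?_
  by_cases hst : Q s t = 0
  · rw [hst, zero_mul]
  · rw [hz t (apply_ne_zero_of_vecMul_one_sub hQ hm he hme hs hst), mul_zero]

lemma Matrix.dotProduct_diagonal_mul_one_sub_mulVec_nonneg (hQ : ∀ s t, 0 ≤ Q s t)
    (hQrow : ∀ s, ∑ t, Q s t ≤ 1) (hm : 0 ≤ m) (he : 0 ≤ e) (hme : m ᵥ* (1 - Q) = e)
    (z : S → ℝ) : 0 ≤ z ⬝ᵥ (diagonal m * (1 - Q)) *ᵥ z := by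
  have h2 := two_mul_dotProduct_diagonal_mul_one_sub_mulVec hme z
  have hrows : 0 ≤ ∑ s, m s * ((1 - ∑ t, Q s t) * z s ^ 2 + ∑ t, Q s t * (z s - z t) ^ 2) :=
    Finset.sum_nonneg fun s _ => mul_nonneg (hm s)
      (one_sub_sum_mul_sq_add_sum_mul_sq_nonneg (hQ s) (hQrow s) _ _)
  have hexit : 0 ≤ ∑ s, e s * z s ^ 2 :=
    Finset.sum_nonneg fun s _ => mul_nonneg (he s) (sq_nonneg _)
  linarith

lemma Matrix.apply_eq_zero_of_dotProduct_diagonal_mul_one_sub_mulVec_eq_zero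
    (hQ : ∀ s t, 0 ≤ Q s t) (hQrow : ∀ s, ∑ t, Q s t ≤ 1) (hunit : IsUnit (1 - Q))
    (hm : 0 ≤ m) (he : 0 ≤ e) (hme : m ᵥ* (1 - Q) = e) {z : S → ℝ}
    (hz : z ⬝ᵥ (diagonal m * (1 - Q)) *ᵥ z = 0) {s : S} (hs : m s ≠ 0) : z s = 0 := by
  have hrow_nonneg : ∀ s ∈ Finset.univ,
      0 ≤ m s * ((1 - ∑ t, Q s t) * z s ^ 2 + ∑ t, Q s t * (z s - z t) ^ 2) := fun s _ =>
    mul_nonneg (hm s) (one_sub_sum_mul_sq_add_sum_mul_sq_nonneg (hQ s) (hQrow s) _ _)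
  have hsum := two_mul_dotProduct_diagonal_mul_one_sub_mulVec hme z
  rw [hz, mul_zero] at hsum
  have hrows : ∑ s, m s * ((1 - ∑ t, Q s t) * z s ^ 2 + ∑ t, Q s t * (z s - z t) ^ 2) = 0 := by
    linarith [Finset.sum_nonneg hrow_nonneg,
      Finset.sum_nonneg fun s (_ : s ∈ Finset.univ) => mul_nonneg (he s) (sq_nonneg (z s))]
  have hbalance : ∀ s, m s ≠ 0 → z s ^ 2 = ∑ t, Q s t * z t ^ 2 := fun s hs =>
    sq_eq_sum_mul_sq_of_one_sub_sum_mul_sq_add_sum_mul_sq_eq_zero (hQ s) (hQrow s)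
      ((mul_eq_zero.mp ((Finset.sum_eq_zero_iff_of_nonneg hrow_nonneg).mp hrows s
        (Finset.mem_univ s))).resolve_left hs)
  set w : S → ℝ := fun s => if m s = 0 then 0 else z s ^ 2 with hw
  have hsub : (1 - Q) *ᵥ w ≤ 0 := by
    intro s
    rw [sub_mulVec, one_mulVec, Pi.sub_apply, Pi.zero_apply, sub_nonpos]
    by_cases hs : m s = 0
    · simp only [hw, hs, if_true]
      exact Finset.sum_nonneg fun t _ => mul_nonneg (hQ s t) (by positivity)
    · refine le_of_eq ?_
      simp only [hw, hs, if_false, hbalance s hs, mulVec, dotProduct]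
      refine Finset.sum_congr rfl fun t _ => ?_
      by_cases hst : Q s t = 0
      · rw [hst, zero_mul, zero_mul]
      · rw [if_neg (apply_ne_zero_of_vecMul_one_sub hQ hm he hme hs hst)]
  have hws := nonpos_of_mulVec_nonpos hunit (inv_one_sub_apply_nonneg hQ hQrow hunit) hsub s
  simp only [hw, hs, if_false, Pi.zero_apply] at hws
  exact pow_eq_zero_iff two_ne_zero |>.mp (le_antisymm hws (sq_nonneg _))

lemma Matrix.dotProduct_transpose_mul_diagonal_mul_one_sub_mul_mulVec_pos {ι : Type*} [Fintype ι]
    (hQ : ∀ s t, 0 ≤ Q s t) (hQrow : ∀ s, ∑ t, Q s t ≤ 1) (hunit : IsUnit (1 - Q))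
    (hm : 0 ≤ m) (he : 0 ≤ e) (hme : m ᵥ* (1 - Q) = e) {Φ : Matrix S ι ℝ}
    (hΦ : Function.Injective Φ.mulVec)
    (hsupp : ∀ x, (∀ s, m s ≠ 0 → (Φ *ᵥ x) s = 0) → Φ *ᵥ x = 0) {y : ι → ℝ} (hy : y ≠ 0) :
    0 < y ⬝ᵥ (Φᵀ * diagonal m * (1 - Q) * Φ) *ᵥ y := by
  rw [Matrix.mul_assoc Φᵀ, dotProduct_transpose_mul_mul_mulVec]
  refine (dotProduct_diagonal_mul_one_sub_mulVec_nonneg hQ hQrow hm he hme _).lt_of_ne fun h => ?_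
  refine hy (hΦ ?_)
  rw [mulVec_zero]
  exact hsupp y fun s hs => apply_eq_zero_of_dotProduct_diagonal_mul_one_sub_mulVec_eq_zero
    hQ hQrow hunit hm he hme h.symm hs

lemma Matrix.mulVec_eq_zero_of_isUnit_transpose_mul_diagonal_mul_one_sub_mul {ι : Type*}
    [Fintype ι] [DecidableEq ι] (hQ : ∀ s t, 0 ≤ Q s t) (hm : 0 ≤ m) (he : 0 ≤ e)
    (hme : m ᵥ* (1 - Q) = e) {Φ : Matrix S ι ℝ} (hG : IsUnit (Φᵀ * diagonal m * (1 - Q) * Φ))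
    {x : ι → ℝ} (hx : ∀ s, m s ≠ 0 → (Φ *ᵥ x) s = 0) : Φ *ᵥ x = 0 := by
  have hGx : (Φᵀ * diagonal m * (1 - Q) * Φ) *ᵥ x = 0 := by
    rw [Matrix.mul_assoc Φᵀ, ← mulVec_mulVec, ← mulVec_mulVec,
      diagonal_mul_one_sub_mulVec_eq_zero hQ hm he hme hx, mulVec_zero]
  rw [mulVec_injective_iff_isUnit.mpr hG (hGx.trans (mulVec_zero _).symm), mulVec_zero]

end

theorem stmt16_general {S : Type} [Fintype S] [DecidableEq S] (n : ℕ)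
    (P : Matrix S S ℝ) (hP0 : ∀ s s', 0 ≤ P s s') (hP1 : ∀ s, ∑ s', P s s' = 1)
    (γf lamf : S → ℝ)
    (hγ : ∀ s, γf s ∈ Set.Icc (0 : ℝ) 1) (hlam : ∀ s, lamf s ∈ Set.Icc (0 : ℝ) 1)
    (h1 : IsUnit (1 - P * Matrix.diagonal γf))
    (h2 : IsUnit (1 - P * Matrix.diagonal γf * Matrix.diagonal lamf))
    (d ifun : S → ℝ) (hd : ∀ s, 0 < d s) (hi : ∀ s, 0 ≤ ifun s)
    (Φ : Matrix S (Fin n) ℝ)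
    (hΦ : LinearIndependent ℝ fun j : Fin n => fun s : S => Φ s j) :
    ((∀ x : Fin n → ℝ,
        (∀ s, MdiagOf P γf lamf d ifun s ≠ 0 → Φ.mulVec x s = 0) → Φ.mulVec x = 0) →
      ∃ c : ℝ, 0 < c ∧
        ∀ y : Fin n → ℝ, y ⬝ᵥ (Cof P γf lamf d ifun Φ).mulVec y ≤ -c * (y ⬝ᵥ y)) ∧
    (IsUnit (Cof P γf lamf d ifun Φ) ↔
      ∀ x : Fin n → ℝ,
        (∀ s, MdiagOf P γf lamf d ifun s ≠ 0 → Φ.mulVec x s = 0) → Φ.mulVec x = 0) := by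
  have hA0 : ∀ s t, 0 ≤ (P * diagonal γf) s t := mul_diagonal_apply_nonneg hP0 fun t => (hγ t).1
  have hArow : ∀ s, ∑ t, (P * diagonal γf) s t ≤ 1 := fun s =>
    (Finset.sum_le_sum fun t _ => mul_diagonal_apply_le hP0 (fun t => (hγ t).2) s t).trans
      (hP1 s).le
  have hXA : ∀ s t, (P * diagonal γf * diagonal lamf) s t ≤ (P * diagonal γf) s t :=
    mul_diagonal_apply_le hA0 fun t => (hlam t).2
  have hXinv := inv_one_sub_apply_nonneg (mul_diagonal_apply_nonneg hA0 fun t => (hlam t).1)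
    (fun s => (Finset.sum_le_sum fun t _ => hXA s t).trans (hArow s)) h2
  have hQ : ∀ s t, 0 ≤ Qof P γf lamf s t :=
    one_sub_inv_one_sub_mul_one_sub_apply_nonneg h2 hXinv hXA
  have hQrow : ∀ s, ∑ t, Qof P γf lamf s t ≤ 1 :=
    sum_one_sub_inv_one_sub_mul_one_sub_apply_le_one hXinv hArow
  have hQunit : IsUnit (1 - Qof P γf lamf) := by
    rw [Qof, sub_sub_cancel]; exact (isUnit_nonsing_inv_iff.mpr h2).mul h1
  have he : 0 ≤ fun s => d s * ifun s := fun s => mul_nonneg (hd s).le (hi s)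
  have hm : 0 ≤ MdiagOf P γf lamf d ifun := fun t => Finset.sum_nonneg fun s _ =>
    mul_nonneg (he s) (inv_one_sub_apply_nonneg hQ hQrow hQunit s t)
  have hme : MdiagOf P γf lamf d ifun ᵥ* (1 - Qof P γf lamf) = fun s => d s * ifun s := by
    rw [MdiagOf, vecMul_vecMul, nonsing_inv_mul _ ((isUnit_iff_isUnit_det _).mp hQunit),
      vecMul_one]
  have hpos := fun hsupp y (hy : y ≠ 0) =>
    dotProduct_transpose_mul_diagonal_mul_one_sub_mul_mulVec_pos hQ hQrow hQunit hm he hme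
      (mulVec_injective_iff.mpr hΦ) hsupp hy
  refine ⟨fun hsupp => ?_, fun hC x hx => ?_, fun hsupp => ?_⟩
  · obtain ⟨c, hc, hle⟩ := exists_pos_mul_dotProduct_self_le _ (hpos hsupp)
    refine ⟨c, hc, fun y => ?_⟩
    rw [Cof, neg_mulVec, dotProduct_neg]
    linarith [hle y]
  · exact mulVec_eq_zero_of_isUnit_transpose_mul_diagonal_mul_one_sub_mul hQ hm he hme
      ((IsUnit.neg_iff _).mp hC) hx
  · exact (isUnit_of_forall_dotProduct_mulVec_pos (hpos hsupp)).neg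

/-- With `J₀ = {s : M̄_ss = 0}` and `E` the column space of `Φ`,
condition (★) (any `v ∈ E` vanishing outside `J₀` is zero) implies that `C` is
negative definite; moreover `C` is nonsingular iff (★) holds. -/
theorem stmt16 {S : Type} [Fintype S] [Nonempty S] [DecidableEq S] (n : ℕ) (hn : 1 ≤ n)
    (P : Matrix S S ℝ) (hP0 : ∀ s s', 0 ≤ P s s') (hP1 : ∀ s, ∑ s', P s s' = 1)
    (γf lamf : S → ℝ)
    (hγ : ∀ s, γf s ∈ Set.Icc (0 : ℝ) 1) (hlam : ∀ s, lamf s ∈ Set.Icc (0 : ℝ) 1)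
    (h1 : IsUnit (1 - P * Matrix.diagonal γf))
    (h2 : IsUnit (1 - P * Matrix.diagonal γf * Matrix.diagonal lamf))
    (d ifun : S → ℝ) (hd : ∀ s, 0 < d s) (hi : ∀ s, 0 ≤ ifun s)
    (Φ : Matrix S (Fin n) ℝ)
    (hΦ : LinearIndependent ℝ fun j : Fin n => fun s : S => Φ s j) :
    ((∀ x : Fin n → ℝ,
        (∀ s, MdiagOf P γf lamf d ifun s ≠ 0 → Φ.mulVec x s = 0) → Φ.mulVec x = 0) →
      ∃ c : ℝ, 0 < c ∧
        ∀ y : Fin n → ℝ, y ⬝ᵥ (Cof P γf lamf d ifun Φ).mulVec y ≤ -c * (y ⬝ᵥ y)) ∧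
    (IsUnit (Cof P γf lamf d ifun Φ) ↔
      ∀ x : Fin n → ℝ,
        (∀ s, MdiagOf P γf lamf d ifun s ≠ 0 → Φ.mulVec x s = 0) → Φ.mulVec x = 0) :=
  stmt16_general n P hP0 hP1 γf lamf hγ hlam h1 h2 d ifun hd hi Φ hΦ
end
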